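/- arXiv:2112.07518 — 5 statements merged into one kernel-verified Lean document; each statement's English description precedes it below -/
import Mathlib

section
/- For any finite poset F, the map sending a nonempty chain of F to its maximum element is a surjective p-morphism from the nerve N(F) onto F. -/
/-- The nerve of a poset `F`: nonempty finite chains ordered by inclusion. -/
def Nerve (F : Type*) [PartialOrder F] : Type _ :=
  {C : Finset F // C.Nonempty ∧ IsChain (· ≤ ·) (C : Set F)}

instance {F : Type*} [PartialOrder F] : PartialOrder (Nerve F) :=
  Subtype.partialOrder _

/-- For any finite poset `F`, the map sending a nonempty chain to its maximum
element is a surjective p-morphism from the nerve `N(F)` onto `F`. -/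
theorem stmt1 {F : Type*} [Fintype F] [PartialOrder F]
    (m : Nerve F → F)
    (hmax : ∀ C : Nerve F, m C ∈ C.1 ∧ ∀ y ∈ C.1, y ≤ m C) :
    Function.Surjective m ∧ ∀ C : Nerve F, m '' Set.Ici C = Set.Ici (m C) := by
  classical
  constructor
  · intro x
    refine ⟨⟨{x}, ⟨x, by simp⟩, by simp⟩, ?_⟩
    have h := hmax ⟨{x}, ⟨x, by simp⟩, by simp⟩
    simpa using h.1
  · intro C
    ext y
    constructor
    · rintro ⟨D, hD, rfl⟩
      exact (hmax D).2 (m C) (hD (hmax C).1)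
    · intro hy
      have hyC : ∀ z ∈ C.1, z ≤ y := fun z hz => le_trans ((hmax C).2 z hz) hy
      have hchain : IsChain (· ≤ ·) ((insert y C.1 : Finset F) : Set F) := by
        intro a ha b hb hab
        simp only [Finset.coe_insert, Set.mem_insert_iff, Finset.mem_coe] at ha hb
        rcases ha with rfl | ha
        · rcases hb with rfl | hb
          · exact absurd rfl hab
          · exact Or.inr (hyC b hb)
        · rcases hb with rfl | hb
          · exact Or.inl (hyC a ha)
          · exact C.2.2 ha hb hab
      set D : Nerve F := ⟨insert y C.1, ⟨y, Finset.mem_insert_self _ _⟩, hchain⟩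
      refine ⟨D, fun z hz => Finset.mem_insert_of_mem hz, ?_⟩
      have h1 : y ≤ m D := (hmax D).2 y (Finset.mem_insert_self _ _)
      have h2 : m D ≤ y := by
        rcases Finset.mem_insert.mp (hmax D).1 with h | h
        · exact le_of_eq h
        · exact hyC _ h
      exact le_antisymm h2 h1
end

section
/- Let Σ and Δ be simplicial complexes in ℝⁿ with Δ a subdivision of Σ (same support, every simplex of Δ contained in a simplex of Σ). Then every simplex σ of Σ equals the union of the simplices of Δ contained in σ. -/
/-!
Let `x` lie in a simplex `s` of `Σ`. Since `|Δ| = |Σ|`, `x` lies in a simplex of `Δ`, and passing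
to a face we may assume `x` is a combination of the vertices of `t ∈ Δ` with all weights positive.
Pick `s' ∈ Σ` with `t ⊆ conv s'`. Then `x ∈ conv s ∩ conv s' = conv (s ∩ s')`, and `conv (s ∩ s')`
is a face of the simplex `conv s'`: by uniqueness of barycentric coordinates in `s'`, a point of it
written as a positive combination of points of `conv s'` forces all these points into the face.
Hence `conv t ⊆ conv (s ∩ s') ⊆ conv s`.
-/

open Geometry Finset

variable {𝕜 E : Type*} [Field 𝕜] [LinearOrder 𝕜] [IsStrictOrderedRing 𝕜]
  [AddCommGroup E] [Module 𝕜 E]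

lemma Finset.exists_subset_pos_sum_smul_eq_of_mem_convexHull {s : Finset E} {x : E}
    (hx : x ∈ convexHull 𝕜 (s : Set E)) :
    ∃ t ⊆ s, ∃ w : E → 𝕜, (∀ y ∈ t, 0 < w y) ∧ ∑ y ∈ t, w y = 1 ∧ ∑ y ∈ t, w y • y = x := by
  classical
  obtain ⟨w, hw₀, hw₁, hwx⟩ := mem_convexHull'.1 hx
  refine ⟨s.filter (w · ≠ 0), filter_subset _ _, w, fun y hy => ?_, ?_, ?_⟩
  · rw [mem_filter] at hy
    exact (hw₀ y hy.1).lt_of_ne' hy.2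
  · rwa [sum_filter_ne_zero]
  · rwa [sum_filter_of_ne fun y _ h => left_ne_zero_of_smul h]

lemma AffineIndependent.eq_zero_of_sum_smul_mem_convexHull {s τ : Finset E}
    (hs : AffineIndependent 𝕜 ((↑) : s → E)) (hτ : τ ⊆ s) {u : E → 𝕜}
    (hu : ∑ i ∈ s, u i = 1) (hx : ∑ i ∈ s, u i • i ∈ convexHull 𝕜 (τ : Set E)) :
    ∀ i ∈ s, i ∉ τ → u i = 0 := by
  classical
  obtain ⟨d, -, hd₁, hdx⟩ := mem_convexHull'.1 hx
  have hud := hs.eq_of_sum_eq_sum_subtype (w₁ := u) (w₂ := fun i => if i ∈ τ then d i else 0)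
    (by rw [hu, ← sum_filter, filter_mem_eq_inter, inter_eq_right.2 hτ, hd₁])
    (by simp only [ite_smul, zero_smul, ← sum_filter, filter_mem_eq_inter,
      inter_eq_right.2 hτ, hdx])
  intro i hi hiτ
  simpa [hiτ] using hud i hi

lemma AffineIndependent.subset_convexHull_of_pos_sum_smul_mem {s τ t : Finset E}
    (hs : AffineIndependent 𝕜 ((↑) : s → E)) (hτ : τ ⊆ s)
    (ht : (t : Set E) ⊆ convexHull 𝕜 (s : Set E)) {w : E → 𝕜} (hw₀ : ∀ y ∈ t, 0 < w y)
    (hw₁ : ∑ y ∈ t, w y = 1) (hx : ∑ y ∈ t, w y • y ∈ convexHull 𝕜 (τ : Set E)) :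
    (t : Set E) ⊆ convexHull 𝕜 (τ : Set E) := by
  have hcoord : ∀ p ∈ t, ∃ c : E → 𝕜,
      (∀ i ∈ s, 0 ≤ c i) ∧ ∑ i ∈ s, c i = 1 ∧ ∑ i ∈ s, c i • i = p :=
    fun p hp => mem_convexHull'.1 (ht hp)
  choose! c hc₀ hc₁ hcp using hcoord
  have hu₁ : ∑ i ∈ s, ∑ p ∈ t, w p * c p i = 1 := by
    rw [sum_comm, ← hw₁]
    exact sum_congr rfl fun p hp => by rw [← mul_sum, hc₁ p hp, mul_one]
  have hux : ∑ i ∈ s, (∑ p ∈ t, w p * c p i) • i = ∑ p ∈ t, w p • p := by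
    simp_rw [sum_smul, mul_smul]
    rw [sum_comm]
    exact sum_congr rfl fun p hp => by rw [← smul_sum, hcp p hp]
  have hu₀ := hs.eq_zero_of_sum_smul_mem_convexHull hτ hu₁ (hux ▸ hx)
  intro p hp
  have hcp₀ : ∀ i ∈ s, i ∉ τ → c p i = 0 := fun i hi hiτ =>
    (mul_eq_zero.1 <| (sum_eq_zero_iff_of_nonneg fun q hq =>
      mul_nonneg (hw₀ q hq).le (hc₀ q hq i hi)).1 (hu₀ i hi hiτ) p hp).resolve_left
      (hw₀ p hp).ne'
  refine mem_convexHull'.2 ⟨c p, fun i hi => hc₀ p hp i (hτ hi), ?_, ?_⟩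
  · rw [sum_subset hτ hcp₀]
    exact hc₁ p hp
  · rw [sum_subset hτ fun i hi hiτ => by rw [hcp₀ i hi hiτ, zero_smul]]
    exact hcp p hp

theorem Geometry.SimplicialComplex.convexHull_eq_biUnion_of_subdivision
    {K L : SimplicialComplex 𝕜 E} (hspace : L.space = K.space)
    (hsub : ∀ t ∈ L.faces, ∃ s ∈ K.faces, convexHull 𝕜 (t : Set E) ⊆ convexHull 𝕜 (s : Set E))
    {s : Finset E} (hs : s ∈ K.faces) :
    convexHull 𝕜 (s : Set E) =
      ⋃ t ∈ {t ∈ L.faces | convexHull 𝕜 (t : Set E) ⊆ convexHull 𝕜 (s : Set E)},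
        convexHull 𝕜 (t : Set E) := by
  classical
  refine subset_antisymm (fun x hx => ?_) (Set.iUnion₂_subset fun t ht => ht.2)
  obtain ⟨t₁, ht₁, hxt₁⟩ := L.mem_space_iff.1 (hspace ▸ K.convexHull_subset_space hs hx)
  obtain ⟨t, htt₁, w, hw₀, hw₁, rfl⟩ := exists_subset_pos_sum_smul_eq_of_mem_convexHull hxt₁
  have htL : t ∈ L.faces :=
    L.down_closed ht₁ htt₁ (nonempty_of_sum_ne_zero (hw₁ ▸ one_ne_zero))
  have hxt : ∑ y ∈ t, w y • y ∈ convexHull 𝕜 (t : Set E) :=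
    mem_convexHull'.2 ⟨w, fun y hy => (hw₀ y hy).le, hw₁, rfl⟩
  obtain ⟨s', hs', hts'⟩ := hsub t htL
  have hxs's : ∑ y ∈ t, w y • y ∈ convexHull 𝕜 ((s' ∩ s : Finset E) : Set E) := by
    rw [coe_inter, ← K.convexHull_inter_convexHull hs' hs]
    exact ⟨hts' hxt, hx⟩
  have hts's := (K.indep hs').subset_convexHull_of_pos_sum_smul_mem inter_subset_left
    ((subset_convexHull 𝕜 _).trans hts') hw₀ hw₁ hxs's
  exact Set.mem_biUnion ⟨htL, (convexHull_min hts's (convex_convexHull 𝕜 _)).trans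
    (convexHull_mono inter_subset_right)⟩ hxt

theorem stmt4_general {n : ℕ} (K L : SimplicialComplex ℝ (Fin n → ℝ))
    (hspace : L.space = K.space)
    (hsub : ∀ t ∈ L.faces, ∃ s ∈ K.faces,
      convexHull ℝ (t : Set (Fin n → ℝ)) ⊆ convexHull ℝ (s : Set (Fin n → ℝ))) :
    ∀ s ∈ K.faces,
      convexHull ℝ (s : Set (Fin n → ℝ)) =
        ⋃ t ∈ {t ∈ L.faces |
          convexHull ℝ (t : Set (Fin n → ℝ)) ⊆ convexHull ℝ (s : Set (Fin n → ℝ))},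
          convexHull ℝ (t : Set (Fin n → ℝ)) :=
  fun _ hs => SimplicialComplex.convexHull_eq_biUnion_of_subdivision hspace hsub hs

/-- If `Δ` is a subdivision of `Σ` (same support, every simplex of `Δ` contained
in a simplex of `Σ`), then every simplex of `Σ` is the union of the simplices of
`Δ` contained in it. -/
theorem stmt4 {n : ℕ} (K L : SimplicialComplex ℝ (Fin n → ℝ))
    (hKfin : K.faces.Finite) (hLfin : L.faces.Finite)
    (hspace : L.space = K.space)
    (hsub : ∀ t ∈ L.faces, ∃ s ∈ K.faces,
      convexHull ℝ (t : Set (Fin n → ℝ)) ⊆ convexHull ℝ (s : Set (Fin n → ℝ))) :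
    ∀ s ∈ K.faces,
      convexHull ℝ (s : Set (Fin n → ℝ)) =
        ⋃ t ∈ {t ∈ L.faces |
          convexHull ℝ (t : Set (Fin n → ℝ)) ⊆ convexHull ℝ (s : Set (Fin n → ℝ))},
          convexHull ℝ (t : Set (Fin n → ℝ)) :=
  stmt4_general K L hspace hsub
end

section
/- Every polyhedron P ⊆ ℝᵐ is PL-homeomorphic to a rational polyhedron Q ⊆ ℝⁿ for some n, via a map carrying a given triangulation Σ of P to a unimodular triangulation Δ of Q that is isomorphic to Σ as a poset. -/
open Geometry

/-- A polyhedron: a finite union of polytopes (convex hulls of finite sets). -/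
def IsPolyhedron {E : Type*} [AddCommGroup E] [Module ℝ E] (P : Set E) : Prop :=
  ∃ S : Finset (Finset E), P = ⋃ s ∈ S, convexHull ℝ (s : Set E)

/-- A point of `ℝⁿ` is rational if all its coordinates are rational. -/
def IsRatPt {n : ℕ} (x : Fin n → ℝ) : Prop := ∀ i, ∃ q : ℚ, x i = (q : ℝ)

/-- A rational polyhedron: a finite union of convex hulls of finite sets of
rational points. -/
def IsRatPolyhedron {n : ℕ} (P : Set (Fin n → ℝ)) : Prop :=
  ∃ S : Finset (Finset (Fin n → ℝ)),
    (∀ s ∈ S, ∀ x ∈ s, IsRatPt x) ∧ P = ⋃ s ∈ S, convexHull ℝ (s : Set (Fin n → ℝ))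

/-- Denominator of a rational point. -/
def ratDen {n : ℕ} (x : Fin n → ℚ) : ℕ := Finset.univ.lcm fun i => (x i).den

/-- Homogeneous correspondent `x̃ ∈ ℤ^{n+1}` of a rational point. -/
def homogZ {n : ℕ} (x : Fin n → ℚ) : Fin (n + 1) → ℤ :=
  Fin.snoc (fun i => ((ratDen x : ℚ) * x i).num) (ratDen x : ℤ)

/-- A finset of points of `ℝⁿ` is a unimodular simplex vertex set: all points are
rational and their homogeneous correspondents extend to a `ℤ`-basis of `ℤ^{n+1}`. -/
def IsUnimodular {n : ℕ} (s : Finset (Fin n → ℝ)) : Prop :=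
  ∃ q : (Fin n → ℝ) → (Fin n → ℚ),
    (∀ v ∈ s, ∀ i, v i = ((q v i : ℚ) : ℝ)) ∧
    ∃ b : Module.Basis (Fin (n + 1)) ℤ (Fin (n + 1) → ℤ),
      ∀ v ∈ s, homogZ (q v) ∈ Set.range b

/-- The graph of `f` restricted to `P`. -/
def graphOn {m n : ℕ} (f : (Fin m → ℝ) → (Fin n → ℝ)) (P : Set (Fin m → ℝ)) :
    Set ((Fin m → ℝ) × (Fin n → ℝ)) :=
  {p | p.1 ∈ P ∧ p.2 = f p.1}

/-!
Number the vertices `v₁, …, vₙ` of `K` and send `vᵢ` to the standard basis vector `eᵢ ∈ ℝⁿ`;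
the images of the faces of `K` form a subcomplex `Δ` of the standard simplex. Its vertices are
rational, and its faces are unimodular because the vectors `(eᵢ, 1)` together with `(0, 1)` span,
hence form a basis of, `ℤⁿ⁺¹`. The linear map `g y = ∑ yᵢ vᵢ` maps each face of `Δ` affinely
isomorphically onto the corresponding face of `K`. As two faces of `K` meet in a common face, `g`
is injective on `|Δ|`, so, `|Δ|` being compact, `g` is a homeomorphism `|Δ| → P`. Both `g` and
its inverse `f` are PL, since their graphs are the images of the polyhedron `|Δ|` under the
linear maps `y ↦ (y, g y)` and `y ↦ (g y, y)`.
-/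

open Function

section

open Set

theorem AffineMap.injOn_convexHull_of_affineIndependent_comp {k E F ι : Type*} [Field k]
    [LinearOrder k] [IsStrictOrderedRing k] [AddCommGroup E] [Module k E] [AddCommGroup F]
    [Module k F] [Finite ι] {p : ι → F} (f : F →ᵃ[k] E) (h : AffineIndependent k (f ∘ p)) :
    InjOn f (convexHull k (range p)) := by
  have := Fintype.ofFinite ι
  intro x hx y hy hxy
  obtain ⟨w, hw, rfl⟩ := eq_affineCombination_of_mem_affineSpan_of_fintype
    (convexHull_subset_affineSpan _ hx)
  obtain ⟨w', hw', rfl⟩ := eq_affineCombination_of_mem_affineSpan_of_fintype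
    (convexHull_subset_affineSpan _ hy)
  rw [Finset.map_affineCombination _ _ _ hw, Finset.map_affineCombination _ _ _ hw'] at hxy
  exact Finset.affineCombination_congr _ ((h.affineCombination_eq_iff_eq hw hw').1 hxy)
    fun _ _ => rfl

theorem ContinuousOn.continuousOn_invFunOn_image {X Y : Type*} [TopologicalSpace X]
    [TopologicalSpace Y] [T2Space Y] [Nonempty X] {g : X → Y} {s : Set X} (hs : IsCompact s)
    (hg : ContinuousOn g s) (hinj : InjOn g s) : ContinuousOn (invFunOn g s) (g '' s) := by
  refine continuousOn_iff_isClosed.2 fun C hC => ⟨g '' (s ∩ C),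
    ((hs.inter_right hC).image_of_continuousOn (hg.mono inter_subset_left)).isClosed, ?_⟩
  ext y
  constructor
  · rintro ⟨hyC, x, hx, rfl⟩
    rw [mem_preimage, hinj.leftInvOn_invFunOn hx] at hyC
    exact ⟨⟨x, ⟨hx, hyC⟩, rfl⟩, x, hx, rfl⟩
  · rintro ⟨⟨x, ⟨hx, hxC⟩, rfl⟩, -⟩
    exact ⟨by rwa [mem_preimage, hinj.leftInvOn_invFunOn hx], x, hx, rfl⟩

theorem Set.LeftInvOn.image_convexHull_image {𝕜 E F : Type*} [Field 𝕜] [LinearOrder 𝕜]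
    [AddCommGroup E] [Module 𝕜 E] [AddCommGroup F] [Module 𝕜 F] {φ : E → F} {g : F →ₗ[𝕜] E}
    {S u : Set E} (hg : LeftInvOn g φ S) (hu : u ⊆ S) :
    g '' convexHull 𝕜 (φ '' u) = convexHull 𝕜 u := by
  rw [g.image_convexHull, (hg.mono hu).image_image]

end

theorem IsPolyhedron.image_linearMap {E F : Type*} [AddCommGroup E] [Module ℝ E]
    [AddCommGroup F] [Module ℝ F] {P : Set E} (hP : IsPolyhedron P) (T : E →ₗ[ℝ] F) :
    IsPolyhedron (T '' P) := by
  classical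
  obtain ⟨S, rfl⟩ := hP
  refine ⟨S.image (Finset.image T), ?_⟩
  simp only [Set.image_iUnion₂, T.image_convexHull, Finset.set_biUnion_finset_image,
    Finset.coe_image]

namespace Geometry.SimplicialComplex

theorem isPolyhedron_space {E : Type*} [AddCommGroup E] [Module ℝ E]
    {K : SimplicialComplex ℝ E} (hK : K.faces.Finite) : IsPolyhedron K.space :=
  ⟨hK.toFinset, by simp [space]⟩

theorem isRatPolyhedron_space {n : ℕ} {K : SimplicialComplex ℝ (Fin n → ℝ)}
    (hK : K.faces.Finite) (hrat : ∀ t ∈ K.faces, ∀ x ∈ t, IsRatPt x) :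
    IsRatPolyhedron K.space :=
  ⟨hK.toFinset, fun t ht => hrat t (hK.mem_toFinset.1 ht), by simp [space]⟩

end Geometry.SimplicialComplex

theorem graphOn_eq_image {m n : ℕ} (f : (Fin m → ℝ) → Fin n → ℝ) (P : Set (Fin m → ℝ)) :
    graphOn f P = (fun x => (x, f x)) '' P := by
  ext ⟨x, y⟩
  simp [graphOn, eq_comm]

theorem graphOn_invFunOn_image {m n : ℕ} {g : (Fin n → ℝ) → Fin m → ℝ} {Q : Set (Fin n → ℝ)}
    (hg : Set.InjOn g Q) : graphOn (invFunOn g Q) (g '' Q) = (fun y => (g y, y)) '' Q := by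
  rw [graphOn_eq_image, Set.image_image]
  exact Set.image_congr fun y hy => by rw [hg.leftInvOn_invFunOn hy]

theorem IsPolyhedron.graphOn_linearMap {m n : ℕ} {Q : Set (Fin n → ℝ)} (hQ : IsPolyhedron Q)
    (g : (Fin n → ℝ) →ₗ[ℝ] Fin m → ℝ) : IsPolyhedron (graphOn g Q) := by
  rw [graphOn_eq_image]
  exact hQ.image_linearMap (LinearMap.id.prod g)

theorem IsPolyhedron.graphOn_invFunOn_linearMap {m n : ℕ} {Q : Set (Fin n → ℝ)}
    (hQ : IsPolyhedron Q) {g : (Fin n → ℝ) →ₗ[ℝ] Fin m → ℝ} (hg : Set.InjOn g Q) :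
    IsPolyhedron (graphOn (invFunOn g Q) (g '' Q)) := by
  rw [graphOn_invFunOn_image hg]
  exact hQ.image_linearMap (g.prod LinearMap.id)

namespace Geometry.SimplicialComplex

open Set

variable {𝕜 E F : Type*} [Field 𝕜] [LinearOrder 𝕜]
  [AddCommGroup E] [Module 𝕜 E] [AddCommGroup F] [Module 𝕜 F]

theorem coe_subset_vertices {K : SimplicialComplex 𝕜 E} {s : Finset E} (hs : s ∈ K.faces) :
    (s : Set E) ⊆ K.vertices :=
  K.vertices_eq ▸ subset_biUnion_of_mem hs

variable [IsStrictOrderedRing 𝕜] {K : SimplicialComplex 𝕜 E} {φ : E → F} {g : F →ₗ[𝕜] E}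

theorem injOn_convexHull_image_of_leftInvOn (hg : LeftInvOn g φ K.vertices) {s : Finset E}
    (hs : s ∈ K.faces) : InjOn g (convexHull 𝕜 (φ '' s)) := by
  rw [image_eq_range]
  refine g.toAffineMap.injOn_convexHull_of_affineIndependent_comp ?_
  have hgφ : (g.toAffineMap ∘ fun v : (s : Set E) => φ v) = Subtype.val :=
    funext fun v => hg (coe_subset_vertices hs v.2)
  rw [hgφ]
  exact K.indep hs

variable [DecidableEq F] (K φ) (hφ : AffineIndependent 𝕜 fun v : K.vertices => φ v)

def mapOfAffineIndependent : SimplicialComplex 𝕜 F :=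
  ofAffineIndependent (K.toPreAbstractSimplicialComplex.map φ) <| hφ.range.mono <| by
    simp only [iUnion_subset_iff]
    rintro _ ⟨s, hs, rfl⟩ _ hy
    obtain ⟨v, hv, rfl⟩ := Finset.mem_image.1 hy
    exact ⟨⟨v, coe_subset_vertices hs hv⟩, rfl⟩

theorem mem_mapOfAffineIndependent_faces {t : Finset F} :
    t ∈ (K.mapOfAffineIndependent φ hφ).faces ↔ ∃ s ∈ K.faces, s.image φ = t :=
  Iff.rfl

noncomputable def mapOfAffineIndependentFacesOrderIso :
    {s // s ∈ K.faces} ≃o {t // t ∈ (K.mapOfAffineIndependent φ hφ).faces} :=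
  OrderIso.ofSurjective
    (OrderEmbedding.ofMapLEIff
      (fun s => ⟨s.1.image φ, (mem_mapOfAffineIndependent_faces K φ hφ).2 ⟨s.1, s.2, rfl⟩⟩)
      fun s t => by
        simp only [Subtype.mk_le_mk, ← Finset.coe_subset, Finset.coe_image]
        exact (injOn_iff_injective.2 hφ.injective).image_subset_image_iff
          (coe_subset_vertices s.2) (coe_subset_vertices t.2))
    (by rintro ⟨_, s, hs, rfl⟩; exact ⟨⟨s, hs⟩, rfl⟩)

theorem coe_mapOfAffineIndependentFacesOrderIso_apply (s : {s // s ∈ K.faces}) :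
    (K.mapOfAffineIndependentFacesOrderIso φ hφ s).1 = s.1.image φ :=
  rfl

variable {K φ hφ}

theorem image_space_mapOfAffineIndependent (hg : LeftInvOn g φ K.vertices) :
    g '' (K.mapOfAffineIndependent φ hφ).space = K.space := by
  simp only [space, image_iUnion₂, mem_mapOfAffineIndependent_faces, iUnion_exists,
    biUnion_and', iUnion_iUnion_eq_right, Finset.coe_image]
  exact iUnion₂_congr fun s hs => hg.image_convexHull_image (coe_subset_vertices hs)

theorem injOn_space_mapOfAffineIndependent (hg : LeftInvOn g φ K.vertices) :
    InjOn g (K.mapOfAffineIndependent φ hφ).space := by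
  classical
  simp only [InjOn, mem_space_iff, mem_mapOfAffineIndependent_faces]
  rintro y ⟨_, ⟨s, hs, rfl⟩, hy⟩ y' ⟨_, ⟨t, ht, rfl⟩, hy'⟩ hyy'
  rw [Finset.coe_image] at hy hy'
  -- `g y` lies in the common face `conv (s ∩ t)`, whose preimage in `conv φ(s ∩ t)` is also
  -- the preimage of `g y` in `conv φ(s)` and in `conv φ(t)`.
  have hst : g y ∈ convexHull 𝕜 (↑s ∩ ↑t) := K.inter_subset_convexHull hs ht
    ⟨hg.image_convexHull_image (coe_subset_vertices hs) ▸ mem_image_of_mem g hy,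
      hyy' ▸ hg.image_convexHull_image (coe_subset_vertices ht) ▸ mem_image_of_mem g hy'⟩
  rw [← Finset.coe_inter, ← hg.image_convexHull_image
    ((Finset.coe_subset.2 Finset.inter_subset_left).trans (coe_subset_vertices hs))] at hst
  obtain ⟨z, hz, hzy⟩ := hst
  have hzs : z ∈ convexHull 𝕜 (φ '' s) :=
    convexHull_mono (image_mono (Finset.coe_subset.2 Finset.inter_subset_left)) hz
  have hzt : z ∈ convexHull 𝕜 (φ '' t) :=
    convexHull_mono (image_mono (Finset.coe_subset.2 Finset.inter_subset_right)) hz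
  rw [← injOn_convexHull_image_of_leftInvOn hg hs hzs hy hzy,
    injOn_convexHull_image_of_leftInvOn hg ht hzt hy' (hzy.trans hyy')]

theorem invFunOn_image_convexHull (hg : LeftInvOn g φ K.vertices) {s : Finset E}
    (hs : s ∈ K.faces) :
    invFunOn g (K.mapOfAffineIndependent φ hφ).space '' convexHull 𝕜 s =
      convexHull 𝕜 (φ '' s) := by
  rw [← hg.image_convexHull_image (coe_subset_vertices hs)]
  refine ((injOn_space_mapOfAffineIndependent hg).leftInvOn_invFunOn.mono ?_).image_image
  rw [← Finset.coe_image]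
  exact convexHull_subset_space ⟨s, hs, rfl⟩

end Geometry.SimplicialComplex

theorem isRatPt_single {n : ℕ} (j : Fin n) : IsRatPt (Pi.single j (1 : ℝ)) := fun i =>
  ⟨(Pi.single j 1 : Fin n → ℚ) i, by by_cases h : i = j <;> simp [h]⟩

/-- The homogeneous correspondent of the unit vector `Pi.single i 1 ∈ ℤⁿ` for `i < n`, and of
the origin for `i = n`. -/
def homogUnitVec (n : ℕ) (i : Fin (n + 1)) : Fin (n + 1) → ℤ :=
  Function.update (Pi.single i 1) (Fin.last n) 1

theorem homogUnitVec_last (n : ℕ) : homogUnitVec n (Fin.last n) = Pi.single (Fin.last n) 1 := by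
  simp [homogUnitVec]

theorem homogUnitVec_sub_homogUnitVec_last {n : ℕ} {i : Fin (n + 1)} (hi : i ≠ Fin.last n) :
    homogUnitVec n i - homogUnitVec n (Fin.last n) = Pi.single i 1 := by
  funext k
  by_cases hk : k = Fin.last n
  · subst hk; simp [homogUnitVec, Ne.symm hi]
  · by_cases hki : k = i <;> simp [homogUnitVec, hk, hki, hi]

theorem top_le_span_range_homogUnitVec (n : ℕ) :
    ⊤ ≤ Submodule.span ℤ (Set.range (homogUnitVec n)) := by
  rw [← (Pi.basisFun ℤ (Fin (n + 1))).span_eq, Submodule.span_le]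
  rintro _ ⟨i, rfl⟩
  rw [Pi.basisFun_apply]
  by_cases hi : i = Fin.last n
  · subst hi
    exact homogUnitVec_last n ▸ Submodule.subset_span ⟨_, rfl⟩
  · rw [← homogUnitVec_sub_homogUnitVec_last hi]
    exact sub_mem (Submodule.subset_span ⟨_, rfl⟩) (Submodule.subset_span ⟨_, rfl⟩)

/-- `n + 1` vectors spanning `ℤⁿ⁺¹` form a basis. -/
noncomputable def homogUnitBasis (n : ℕ) : Module.Basis (Fin (n + 1)) ℤ (Fin (n + 1) → ℤ) :=
  basisOfTopLeSpanOfCardEqFinrank (homogUnitVec n) (top_le_span_range_homogUnitVec n) (by simp)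

theorem homogZ_single {n : ℕ} (j : Fin n) :
    homogZ (Pi.single j (1 : ℚ)) = homogUnitVec n j.castSucc := by
  have hden : ratDen (Pi.single j (1 : ℚ)) = 1 :=
    Nat.dvd_one.1 <| Finset.lcm_dvd fun i _ => by by_cases h : i = j <;> simp [h]
  funext k
  refine Fin.lastCases ?_ (fun i => ?_) k
  · simp [homogZ, hden, homogUnitVec]
  · by_cases h : i = j <;> simp [homogZ, hden, homogUnitVec, h, Fin.castSucc_ne_last]

theorem isUnimodular_of_forall_eq_single {n : ℕ} {t : Finset (Fin n → ℝ)}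
    (ht : ∀ v ∈ t, ∃ j, v = Pi.single j 1) : IsUnimodular t := by
  have hq (j : Fin n) :
      (fun i => if (Pi.single j 1 : Fin n → ℝ) i = 1 then (1 : ℚ) else 0) =
        (Pi.single j 1 : Fin n → ℚ) := by
    funext i; by_cases h : i = j <;> simp [h]
  refine ⟨fun v i => if v i = 1 then 1 else 0, ?_, homogUnitBasis n, ?_⟩
  · rintro v hv i
    obtain ⟨j, rfl⟩ := ht v hv
    by_cases h : i = j <;> simp [h]
  · rintro v hv
    obtain ⟨j, rfl⟩ := ht v hv
    refine ⟨j.castSucc, ?_⟩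
    rw [homogUnitBasis, coe_basisOfTopLeSpanOfCardEqFinrank]
    beta_reduce
    rw [hq, homogZ_single]

namespace Geometry.SimplicialComplex

open Set

variable {E : Type*} [AddCommGroup E] [Module ℝ E] (K : SimplicialComplex ℝ E)

theorem finite_vertices (hK : K.faces.Finite) : K.vertices.Finite :=
  K.vertices_eq ▸ hK.biUnion fun s _ => s.finite_toSet

variable [Finite K.vertices]

open Classical in
noncomputable def stdVertexMap (v : E) : Fin (Nat.card K.vertices) → ℝ :=
  if h : v ∈ K.vertices then Pi.single (Finite.equivFin K.vertices ⟨v, h⟩) 1 else 0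

noncomputable def vertexCombination : (Fin (Nat.card K.vertices) → ℝ) →ₗ[ℝ] E :=
  Fintype.linearCombination ℝ fun j => ((Finite.equivFin K.vertices).symm j : E)

theorem stdVertexMap_of_mem {v : E} (hv : v ∈ K.vertices) :
    K.stdVertexMap v = Pi.single (Finite.equivFin K.vertices ⟨v, hv⟩) 1 := by
  rw [stdVertexMap, dif_pos hv]

theorem affineIndependent_stdVertexMap :
    AffineIndependent ℝ fun v : K.vertices => K.stdVertexMap v := by
  have h : (fun v : K.vertices => K.stdVertexMap v) =
      Pi.basisFun ℝ _ ∘ Finite.equivFin K.vertices :=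
    funext fun v => (K.stdVertexMap_of_mem v.2).trans (Pi.basisFun_apply ℝ _ _).symm
  rw [h]
  exact ((Pi.basisFun ℝ _).linearIndependent.comp _ (Equiv.injective _)).affineIndependent

theorem leftInvOn_vertexCombination_stdVertexMap :
    LeftInvOn K.vertexCombination K.stdVertexMap K.vertices := fun v hv => by
  rw [stdVertexMap_of_mem K hv, vertexCombination, Fintype.linearCombination_apply_single,
    one_smul, Equiv.symm_apply_apply]

noncomputable abbrev stdImage : SimplicialComplex ℝ (Fin (Nat.card K.vertices) → ℝ) :=
  K.mapOfAffineIndependent K.stdVertexMap K.affineIndependent_stdVertexMap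

theorem exists_eq_single_of_mem_stdImage_faces {t y} (ht : t ∈ K.stdImage.faces) (hy : y ∈ t) :
    ∃ j, y = Pi.single j 1 := by
  obtain ⟨s, hs, rfl⟩ := ht
  obtain ⟨v, hv, rfl⟩ := Finset.mem_image.1 hy
  exact ⟨_, K.stdVertexMap_of_mem (coe_subset_vertices hs hv)⟩

theorem isUnimodular_of_mem_stdImage_faces {t} (ht : t ∈ K.stdImage.faces) : IsUnimodular t :=
  isUnimodular_of_forall_eq_single fun _ => K.exists_eq_single_of_mem_stdImage_faces ht

theorem isRatPolyhedron_space_stdImage (hK : K.faces.Finite) :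
    IsRatPolyhedron K.stdImage.space :=
  isRatPolyhedron_space (hK.image _) fun t ht y hy => by
    obtain ⟨j, rfl⟩ := K.exists_eq_single_of_mem_stdImage_faces ht hy
    exact isRatPt_single j

end Geometry.SimplicialComplex

/-- Every polyhedron `P ⊆ ℝᵐ` with a triangulation `Σ` is PL-homeomorphic to a
rational polyhedron `Q ⊆ ℝⁿ`, via a map carrying `Σ` to a unimodular
triangulation `Δ` of `Q` isomorphic to `Σ` as a poset. -/
theorem stmt8 {m : ℕ} (P : Set (Fin m → ℝ))
    (K : SimplicialComplex ℝ (Fin m → ℝ)) (hKfin : K.faces.Finite)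
    (hKP : K.space = P) :
    ∃ (n : ℕ) (Q : Set (Fin n → ℝ)) (Δ : SimplicialComplex ℝ (Fin n → ℝ))
      (f : (Fin m → ℝ) → (Fin n → ℝ)) (g : (Fin n → ℝ) → (Fin m → ℝ)),
      IsRatPolyhedron Q ∧ Δ.space = Q ∧ Δ.faces.Finite ∧
      (∀ t ∈ Δ.faces, IsUnimodular t) ∧
      -- f is a PL homeomorphism from P onto Q with PL inverse g
      ContinuousOn f P ∧ Set.BijOn f P Q ∧ IsPolyhedron (graphOn f P) ∧
      ContinuousOn g Q ∧ (∀ x ∈ P, g (f x) = x) ∧ (∀ y ∈ Q, f (g y) = y) ∧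
      IsPolyhedron (graphOn g Q) ∧
      -- f carries K to Δ, inducing a poset isomorphism of the face posets
      ∃ e : {s : Finset (Fin m → ℝ) // s ∈ K.faces} ≃o
            {t : Finset (Fin n → ℝ) // t ∈ Δ.faces},
        ∀ s : {s : Finset (Fin m → ℝ) // s ∈ K.faces},
          f '' convexHull ℝ (s.1 : Set (Fin m → ℝ)) =
            convexHull ℝ ((e s).1 : Set (Fin n → ℝ)) := by
  subst hKP
  have := (K.finite_vertices hKfin).to_subtype
  set g := K.vertexCombination
  have hg := K.leftInvOn_vertexCombination_stdVertexMap
  have hΔfin : K.stdImage.faces.Finite := hKfin.image _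
  have hΔ : IsCompact K.stdImage.space :=
    hΔfin.isCompact_biUnion fun t _ => t.finite_toSet.isCompact_convexHull ℝ
  have hinj : Set.InjOn g K.stdImage.space :=
    SimplicialComplex.injOn_space_mapOfAffineIndependent hg
  have himg : g '' K.stdImage.space = K.space :=
    SimplicialComplex.image_space_mapOfAffineIndependent hg
  have hbij : Set.BijOn g K.stdImage.space K.space := himg ▸ hinj.bijOn_image
  have hinv := hbij.invOn_invFunOn
  have hg_cont : Continuous g := g.continuous_of_finiteDimensional
  refine ⟨_, _, K.stdImage, Function.invFunOn g K.stdImage.space, g,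
    K.isRatPolyhedron_space_stdImage hKfin, rfl, hΔfin,
    fun t => K.isUnimodular_of_mem_stdImage_faces, ?_, hbij.symm hinv.symm,
    ?_, hg_cont.continuousOn, fun x hx => hinv.2 hx, fun y hy => hinv.1 hy,
    (SimplicialComplex.isPolyhedron_space hΔfin).graphOn_linearMap g,
    K.mapOfAffineIndependentFacesOrderIso _ _, fun s => ?_⟩
  · rw [← himg]
    exact hg_cont.continuousOn.continuousOn_invFunOn_image hΔ hinj
  · rw [← himg]
    exact (SimplicialComplex.isPolyhedron_space hΔfin).graphOn_invFunOn_linearMap hinj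
  · rw [SimplicialComplex.coe_mapOfAffineIndependentFacesOrderIso_apply, Finset.coe_image]
    exact SimplicialComplex.invFunOn_image_convexHull hg s.2
end

section
/- Let F be a finite poset, Q a finite rooted poset with root ⊥. If there exists an up-reduction from F onto Q (a surjective p-morphism from an upward-closed subset of F onto Q), then there exists a pointed up-reduction: a surjective p-morphism f : ↑x → Q for some x ∈ F with f⁻¹{⊥} = {x}. -/
/-! Take `x` maximal among the points of the upward-closed domain `U` that are sent to `⊥`; it
exists because `F` is finite and the reduction hits `⊥`. Since `↑x ⊆ U`, the reduction restricted
to `↑x` is still a p-morphism, it is onto because `f '' ↑x = ↑(f x) = ↑⊥`, and by maximality `x` is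
the only point of `↑x` over `⊥`. -/

theorem Set.surjOn_Ici_of_image_Ici_eq_Ici_bot {α β : Type*} [Preorder α] [Preorder β]
    [OrderBot β] {f : α → β} {x : α} (hx : f '' Set.Ici x = Set.Ici (f x)) (hfx : f x = ⊥) :
    Set.SurjOn f (Set.Ici x) Set.univ := by
  intro q _
  rw [hx, hfx]
  exact bot_le

theorem sep_Ici_eq_singleton_of_maximal {α β : Type*} [PartialOrder α] {U : Set α}
    (hU : IsUpperSet U) {f : α → β} {b : β} {x : α}
    (hx : Maximal (· ∈ {y ∈ U | f y = b}) x) :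
    {y ∈ Set.Ici x | f y = b} = {x} := by
  ext y
  constructor
  · rintro ⟨hxy, hfy⟩
    exact (hx.eq_of_le ⟨hU hxy hx.prop.1, hfy⟩ hxy).symm
  · rintro rfl
    exact ⟨le_rfl, hx.prop.2⟩

theorem stmt10_general {F Q : Type*} [Fintype F] [PartialOrder F]
    [PartialOrder Q] [OrderBot Q]
    (h : ∃ (U : Set F) (f : F → Q),
      (∀ ⦃x y : F⦄, x ≤ y → x ∈ U → y ∈ U) ∧
      (∀ x ∈ U, f '' (Set.Ici x) = Set.Ici (f x)) ∧
      Set.SurjOn f U Set.univ) :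
    ∃ (x : F) (f : F → Q),
      (∀ y ∈ Set.Ici x, f '' (Set.Ici y) = Set.Ici (f y)) ∧
      Set.SurjOn f (Set.Ici x) Set.univ ∧
      {y ∈ Set.Ici x | f y = ⊥} = {x} := by
  obtain ⟨U, f, hU, hpm, hsurj⟩ := h
  obtain ⟨z, hz⟩ := hsurj (Set.mem_univ ⊥)
  obtain ⟨x, hx⟩ := Set.toFinite {y ∈ U | f y = ⊥} |>.exists_maximal ⟨z, hz⟩
  obtain ⟨hxU, hfx⟩ := hx.prop
  exact ⟨x, f, fun y hy => hpm y (hU hy hxU),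
    Set.surjOn_Ici_of_image_Ici_eq_Ici_bot (hpm x hxU) hfx,
    sep_Ici_eq_singleton_of_maximal hU hx⟩

/-- If a finite poset `F` up-reduces onto a finite rooted poset `Q` (surjective
p-morphism from an upward-closed subset of `F` onto `Q`), then there is a
pointed up-reduction: a surjective p-morphism `f : ↑x → Q` whose only preimage
of the root `⊥` is `x` itself. -/
theorem stmt10 {F Q : Type*} [Fintype F] [PartialOrder F]
    [Fintype Q] [PartialOrder Q] [OrderBot Q]
    (h : ∃ (U : Set F) (f : F → Q),
      (∀ ⦃x y : F⦄, x ≤ y → x ∈ U → y ∈ U) ∧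
      (∀ x ∈ U, f '' (Set.Ici x) = Set.Ici (f x)) ∧
      Set.SurjOn f U Set.univ) :
    ∃ (x : F) (f : F → Q),
      (∀ y ∈ Set.Ici x, f '' (Set.Ici y) = Set.Ici (f y)) ∧
      Set.SurjOn f (Set.Ici x) Set.univ ∧
      {y ∈ Set.Ici x | f y = ⊥} = {x} :=
  stmt10_general h
end

section
/- If α and β are signatures with α ≤ β, then there exists a surjective p-morphism from the starlike tree T⟨β⟩ onto the starlike tree T⟨α⟩. -/
/-!
Arm `j < |α|` of `T⟨β⟩` is sent onto arm `j` of `T⟨α⟩`, truncating at its tip: since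
`α(j) ≤ β(j)`, the up-set of a point of the arm still maps onto the whole up-set of its
image. The surplus arms of `T⟨β⟩` collapse onto the tip of arm `0`, a maximal point, so
they satisfy the p-morphism condition trivially. The root goes to the root.
-/

/-- The starlike tree `T⟨α⟩` of a signature `α`: a root `⊥` together with, for
each `j < |α|`, a chain of `α(j)` elements attached directly above the root. -/
def Starlike (α : List ℕ) : Type :=
  WithBot ((j : Fin α.length) × Fin (α.get j))

instance (α : List ℕ) : PartialOrder (Starlike α) :=
  inferInstanceAs (PartialOrder (WithBot ((j : Fin α.length) × Fin (α.get j))))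

open Set Function

def IsPMorphism {X Y : Type*} [Preorder X] [Preorder Y] (f : X → Y) : Prop :=
  ∀ x, f '' Ici x = Ici (f x)

lemma isPMorphism_const {X Y : Type*} [Preorder X] [PartialOrder Y] {c : Y} (hc : IsMax c) :
    IsPMorphism (fun _ : X => c) := fun _ => by
  rw [nonempty_Ici.image_const, hc.Ici_eq]

lemma WithBot.map_surjective {X Y : Type*} {g : X → Y} (hg : Surjective g) :
    Surjective (WithBot.map g)
  | ⊥ => ⟨⊥, rfl⟩
  | (y : Y) => let ⟨x, hx⟩ := hg y; ⟨x, by rw [WithBot.map_coe, hx]⟩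

lemma IsPMorphism.withBot_map {X Y : Type*} [Preorder X] [Preorder Y] {g : X → Y}
    (hg : IsPMorphism g) (hsurj : Surjective g) : IsPMorphism (WithBot.map g)
  | ⊥ => by
    rw [WithBot.map_bot, Ici_bot, Ici_bot, image_univ, (WithBot.map_surjective hsurj).range_eq]
  | (x : X) => by
    rw [WithBot.map_coe, WithBot.Ici_coe, WithBot.Ici_coe, ← hg x, image_image, image_image]
    rfl

lemma Sigma.Ici_mk_eq_image {ι : Type*} {A : ι → Type*} [∀ i, Preorder (A i)]
    (i : ι) (a : A i) : Ici (⟨i, a⟩ : Σ i, A i) = Sigma.mk i '' Ici a := by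
  ext p
  constructor
  · rintro ⟨_, _, b, hab⟩
    exact ⟨b, hab, rfl⟩
  · rintro ⟨b, hab, rfl⟩
    exact Sigma.mk_le_mk_iff.2 hab

lemma isPMorphism_sigma {ι κ : Type*} {A : ι → Type*} {B : κ → Type*}
    [∀ i, Preorder (A i)] [∀ k, Preorder (B k)] {f : (Σ i, A i) → Σ k, B k}
    (hf : ∀ i, ∃ k, ∃ g : A i → B k, IsPMorphism g ∧ ∀ a, f ⟨i, a⟩ = ⟨k, g a⟩) :
    IsPMorphism f := by
  rintro ⟨i, a⟩
  obtain ⟨k, g, hg, hfg⟩ := hf i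
  calc f '' Ici ⟨i, a⟩ = Sigma.mk k '' (g '' Ici a) := by
        rw [Sigma.Ici_mk_eq_image, image_image, image_image]
        simp only [hfg]
    _ = Ici (f ⟨i, a⟩) := by rw [hg a, hfg a, Sigma.Ici_mk_eq_image]

def Fin.truncate {m : ℕ} (hm : 0 < m) {n : ℕ} (t : Fin n) : Fin m :=
  ⟨min t (m - 1), by omega⟩

lemma Fin.truncate_surjective {m n : ℕ} (hm : 0 < m) (hmn : m ≤ n) :
    Surjective (Fin.truncate hm : Fin n → Fin m) := fun s =>
  ⟨⟨s, by omega⟩, Fin.ext (by simp only [Fin.truncate]; omega)⟩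

lemma Fin.isPMorphism_truncate {m n : ℕ} (hm : 0 < m) (hmn : m ≤ n) :
    IsPMorphism (Fin.truncate hm : Fin n → Fin m) := by
  intro t
  ext s
  simp only [mem_image, mem_Ici, Fin.le_def, Fin.truncate, Fin.ext_iff]
  constructor
  · rintro ⟨u, htu, hu⟩
    omega
  · intro hs
    exact ⟨⟨max t s, by omega⟩, by simp only; omega, by simp only; omega⟩

lemma Fin.isMax_mk_sub_one {m : ℕ} (hm : 0 < m) : IsMax (⟨m - 1, by omega⟩ : Fin m) :=
  fun b _ => Fin.le_def.2 (Nat.le_sub_one_of_lt b.2)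

lemma Starlike.subsingleton_of_length_eq_zero {α : List ℕ} (h : α.length = 0) :
    Subsingleton (Starlike α) :=
  have : IsEmpty ((j : Fin α.length) × Fin (α.get j)) := ⟨fun p => (h ▸ p.1).elim0⟩
  inferInstanceAs (Subsingleton (WithBot _))

section StarMap

variable {α β : List ℕ} (hpos : 0 < α.length) (hα : ∀ k ∈ α, 0 < k)

def starMap (p : (j : Fin β.length) × Fin (β.get j)) : (j : Fin α.length) × Fin (α.get j) :=
  if h : p.1.val < α.length then
    ⟨⟨p.1, h⟩, Fin.truncate (hα _ (α.get_mem _)) p.2⟩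
  else
    ⟨⟨0, hpos⟩, ⟨α.get ⟨0, hpos⟩ - 1, Nat.sub_one_lt (hα _ (α.get_mem _)).ne'⟩⟩

variable (hlen : α.length ≤ β.length)
  (hle : ∀ j : Fin α.length, α.get j ≤ β.get ⟨j, lt_of_lt_of_le j.2 hlen⟩)
include hle

lemma starMap_surjective : Surjective (starMap (β := β) hpos hα) := by
  rintro ⟨⟨j, hj⟩, s⟩
  obtain ⟨t, ht⟩ := Fin.truncate_surjective (hα _ (α.get_mem _)) (hle ⟨j, hj⟩) s
  exact ⟨⟨⟨j, lt_of_lt_of_le hj hlen⟩, t⟩, by rw [starMap, dif_pos hj, ht]⟩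

lemma isPMorphism_starMap : IsPMorphism (starMap (β := β) hpos hα) := by
  refine isPMorphism_sigma fun ⟨j, hj⟩ => ?_
  by_cases h : j < α.length
  · exact ⟨⟨j, h⟩, _, Fin.isPMorphism_truncate (hα _ (α.get_mem _)) (hle ⟨j, h⟩),
      fun _ => dif_pos h⟩
  · exact ⟨⟨0, hpos⟩, _, isPMorphism_const (Fin.isMax_mk_sub_one (hα _ (α.get_mem _))),
      fun _ => dif_neg h⟩

end StarMap

theorem stmt13_general (α β : List ℕ)
    (hαpos : ∀ k ∈ α, 0 < k)
    (hlen : α.length ≤ β.length)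
    (hle : ∀ j : Fin α.length, α.get j ≤ β.get ⟨j, lt_of_lt_of_le j.2 hlen⟩) :
    ∃ f : Starlike β → Starlike α,
      Function.Surjective f ∧ ∀ x, f '' Set.Ici x = Set.Ici (f x) := by
  rcases Nat.eq_zero_or_pos α.length with h0 | hpos
  · have := Starlike.subsingleton_of_length_eq_zero h0
    exact ⟨fun _ => (⊥ : WithBot _), fun _ => ⟨(⊥ : WithBot _), Subsingleton.elim _ _⟩,
      isPMorphism_const (Subsingleton.isMax _)⟩
  · have hsurj := starMap_surjective hpos hαpos hlen hle
    exact ⟨WithBot.map (starMap hpos hαpos), WithBot.map_surjective hsurj,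
      (isPMorphism_starMap hpos hαpos hlen hle).withBot_map hsurj⟩

/-- If `α ≤ β` as signatures, then there is a surjective p-morphism from the
starlike tree `T⟨β⟩` onto the starlike tree `T⟨α⟩`. -/
theorem stmt13 (α β : List ℕ)
    (hαs : α.Pairwise (· ≥ ·)) (hβs : β.Pairwise (· ≥ ·))
    (hαpos : ∀ k ∈ α, 0 < k) (hβpos : ∀ k ∈ β, 0 < k)
    (hlen : α.length ≤ β.length)
    (hle : ∀ j : Fin α.length, α.get j ≤ β.get ⟨j, lt_of_lt_of_le j.2 hlen⟩) :
    ∃ f : Starlike β → Starlike α,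
      Function.Surjective f ∧ ∀ x, f '' Set.Ici x = Set.Ici (f x) :=
  stmt13_general α β hαpos hlen hle
end
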